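/- Let P be a k-by-n binary matrix, θ = π/8, s ∈ F_2^n, X the output variable of the constant-action X-program (P, π/8), and Y the classical random variable defined by Y = Σ_{p: p·dᵀ=1, p·eᵀ=1} p for independent uniform d, e ∈ F_2^n. If P(X·sᵀ = 0) = 1 then P(Y·sᵀ = 0) = 1. -/

import Mathlib

/-- Hamming weight of a binary vector: number of coordinates equal to 1. -/
def wt {ι : Type*} [Fintype ι] (a : ι → ZMod 2) : ℕ :=
  (Finset.univ.filter fun i => a i = 1).card

/-- Output distribution of the constant-action X-program given by the k-by-n binary
matrix `P` with action `θ`: `P(X = x)`. -/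
noncomputable def XProb {k n : ℕ} (P : Matrix (Fin k) (Fin n) (ZMod 2)) (θ : ℝ)
    (x : Fin n → ZMod 2) : ℝ :=
  ‖∑ a ∈ Finset.univ.filter (fun a : Fin k → ZMod 2 => Matrix.vecMul a P = x),
    (Real.cos θ : ℂ) ^ (k - wt a) * (Complex.I * Real.sin θ) ^ (wt a)‖ ^ 2

/-- The bias of the X-program output distribution in direction `s`:
`P(X ⬝ sᵀ = 0)`, the probability that the output is orthogonal to `s` over `F₂`. -/
noncomputable def bias {k n : ℕ} (P : Matrix (Fin k) (Fin n) (ZMod 2)) (θ : ℝ)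
    (s : Fin n → ZMod 2) : ℝ :=
  ∑ x ∈ Finset.univ.filter (fun x : Fin n → ZMod 2 => dotProduct x s = 0), XProb P θ x

/-!
Let `F` be the output amplitude of the X-program, so that `P(X = x) = ‖F x‖²`. Its Walsh–Hadamard
transform is a pure phase, `F̂ y = exp(iθ(k - 2·wt(P y)))`, and a twisted Plancherel identity gives
`2^(n+1) · P(X·s = 0) = 2^n + Σ_y cos(2θ(wt(P y) - wt(P (y + s))))`.
At `θ = π/8` bias one therefore forces `wt(P y) ≡ wt(P (y + s)) (mod 8)` for every `y`.
Writing `∘` for the coordinatewise product, `wt(P y) - wt(P (y + s)) = 2·wt(P y ∘ P s) - wt(P s)`,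
so (taking `y = 0` first) every word of the code `{P y ∘ P s}` has weight divisible by 4. A doubly
even code is self-orthogonal, and `(Σ_{p·d = p·e = 1} p)·s` is the overlap parity of the codewords
`P d ∘ P s` and `P e ∘ P s`.
-/

open Finset Matrix Complex ComplexConjugate

lemma zmod_two_eq_zero_or_one (z : ZMod 2) : z = 0 ∨ z = 1 := by
  revert z
  decide

noncomputable def signChar : AddChar (ZMod 2) ℂ :=
  AddChar.zmodChar 2 (ζ := -1) (by norm_num)

@[simp] lemma signChar_one : signChar 1 = -1 := by
  simp [signChar, AddChar.zmodChar_apply, ZMod.val_one]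

lemma conj_signChar (z : ZMod 2) : conj (signChar z) = signChar z := by
  rw [← AddChar.map_neg_eq_conj, ZMod.neg_eq_self_mod_two]

lemma signChar_sum {κ : Type*} (t : Finset κ) (f : κ → ZMod 2) :
    signChar (∑ i ∈ t, f i) = ∏ i ∈ t, signChar (f i) := by
  classical
  induction t using Finset.induction_on with
  | empty => simp
  | insert i t hi ih => rw [sum_insert hi, prod_insert hi, AddChar.map_add_eq_mul, ih]

lemma one_add_signChar (z : ZMod 2) : 1 + signChar z = if z = 0 then 2 else 0 := by
  rcases zmod_two_eq_zero_or_one z with rfl | rfl <;> norm_num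

lemma sum_signChar_mul (c : ZMod 2) : ∑ b, signChar (c * b) = if c = 0 then 2 else 0 := by
  rw [show (univ : Finset (ZMod 2)) = {0, 1} from rfl, sum_pair zero_ne_one]
  rcases zmod_two_eq_zero_or_one c with rfl | rfl <;> norm_num

lemma sum_ite_mul_signChar (θ : ℝ) (c : ZMod 2) :
    ∑ b : ZMod 2, (if b = 1 then I * Real.sin θ else (Real.cos θ : ℂ)) * signChar (b * c)
      = exp (θ * signChar c * I) := by
  rw [show (univ : Finset (ZMod 2)) = {0, 1} from rfl, sum_pair zero_ne_one, exp_mul_I]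
  rcases zmod_two_eq_zero_or_one c with rfl | rfl <;> simp <;> ring

lemma exp_ofReal_mul_I_mul_conj (r₁ r₂ : ℝ) :
    exp (r₁ * I) * conj (exp (r₂ * I)) = exp ((r₁ - r₂ : ℝ) * I) := by
  rw [← exp_conj, map_mul, conj_ofReal, conj_I, ← exp_add]
  congr 1
  push_cast
  ring

lemma cos_eq_one_of_sum_cos_eq_card {α : Type*} [Fintype α] (r : α → ℝ)
    (h : ∑ a, Real.cos (r a) = Fintype.card α) (a : α) : Real.cos (r a) = 1 := by
  have hle : ∀ b ∈ univ, Real.cos (r b) ≤ 1 := fun b _ => Real.cos_le_one _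
  exact (sum_eq_sum_iff_of_le hle).1 (by simpa using h) a (mem_univ a)

lemma dvd_of_cos_two_pi_mul_div_eq_one {m N : ℤ} (hN : N ≠ 0)
    (h : Real.cos (2 * Real.pi * m / N) = 1) : N ∣ m := by
  obtain ⟨j, hj⟩ := (Real.cos_eq_one_iff _).1 h
  refine ⟨j, ?_⟩
  have hN' : (N : ℝ) ≠ 0 := by exact_mod_cast hN
  have : (m : ℝ) = N * j := by
    field_simp at hj
    linarith
  exact_mod_cast this

section Vectors

variable {ι : Type*} [Fintype ι]

lemma wt_zero : wt (0 : ι → ZMod 2) = 0 := by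
  simp [wt]

lemma wt_add (a b : ι → ZMod 2) :
    (wt (a + b) : ℤ) = wt a + wt b - 2 * wt (a * b) := by
  simp only [wt, card_filter, Nat.cast_sum, ← sum_add_distrib, mul_sum, ← sum_sub_distrib]
  refine sum_congr rfl fun i _ => ?_
  have key : ∀ x y : ZMod 2, ((if x + y = 1 then 1 else 0 : ℕ) : ℤ)
      = (if x = 1 then 1 else 0 : ℕ) + (if y = 1 then 1 else 0 : ℕ)
        - 2 * (if x * y = 1 then 1 else 0 : ℕ) := by decide
  exact key (a i) (b i)

lemma sum_eq_wt (a : ι → ZMod 2) : ∑ i, a i = wt a := by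
  simp only [wt, card_filter, Nat.cast_sum]
  refine sum_congr rfl fun i _ => ?_
  have key : ∀ x : ZMod 2, x = ((if x = 1 then 1 else 0 : ℕ) : ZMod 2) := by decide
  exact key (a i)

lemma two_dvd_wt_mul_of_four_dvd {a b : ι → ZMod 2} (ha : 4 ∣ (wt a : ℤ)) (hb : 4 ∣ (wt b : ℤ))
    (hab : 4 ∣ (wt (a + b) : ℤ)) : 2 ∣ wt (a * b) := by
  have := wt_add a b
  omega

lemma sum_signChar (u : ι → ZMod 2) : ∑ i, signChar (u i) = Fintype.card ι - 2 * wt u := by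
  have key : ∀ x : ZMod 2, signChar x = 1 - 2 * ((if x = 1 then 1 else 0 : ℕ) : ℂ) := by
    intro x
    rcases zmod_two_eq_zero_or_one x with rfl | rfl <;> norm_num
  simp only [key, sum_sub_distrib, ← mul_sum, wt, card_filter, Nat.cast_sum, sum_const, card_univ,
    nsmul_eq_mul, mul_one]

-- `∏ᵢ ⟨aᵢ| exp(iθX) |0⟩`: the amplitude of flipping exactly the rows in the support of `a`.
noncomputable def amplitude (θ : ℝ) (a : ι → ZMod 2) : ℂ :=
  (Real.cos θ : ℂ) ^ (Fintype.card ι - wt a) * (I * Real.sin θ) ^ wt a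

lemma amplitude_eq_prod (θ : ℝ) (a : ι → ZMod 2) :
    amplitude θ a = ∏ i, if a i = 1 then I * Real.sin θ else (Real.cos θ : ℂ) := by
  have hcard := card_filter_add_card_filter_not (s := univ) (fun i => a i = 1)
  rw [card_univ] at hcard
  rw [prod_ite, prod_const, prod_const, amplitude, mul_comm, ← wt]
  congr 2
  unfold wt at *
  omega

variable [DecidableEq ι]

lemma sum_signChar_dotProduct (u : ι → ZMod 2) :
    ∑ y : ι → ZMod 2, signChar (u ⬝ᵥ y) = if u = 0 then 2 ^ Fintype.card ι else 0 := by
  simp only [dotProduct, signChar_sum]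
  rw [← Fintype.prod_sum fun i b => signChar (u i * b)]
  simp only [sum_signChar_mul, prod_ite_zero, prod_const, card_univ, funext_iff, Pi.zero_apply,
    mem_univ, true_imp_iff]

lemma sum_amplitude_mul_signChar (θ : ℝ) (u : ι → ZMod 2) :
    ∑ a, amplitude θ a * signChar (a ⬝ᵥ u)
      = exp ((θ * (Fintype.card ι - 2 * wt u) : ℝ) * I) := by
  simp only [amplitude_eq_prod, dotProduct, signChar_sum, ← prod_mul_distrib]
  rw [← Fintype.prod_sum fun i b =>
    (if b = 1 then I * Real.sin θ else (Real.cos θ : ℂ)) * signChar (b * u i)]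
  simp only [sum_ite_mul_signChar, ← exp_sum, ← sum_mul, ← mul_sum, sum_signChar]
  push_cast
  ring_nf

noncomputable def walsh (F : (ι → ZMod 2) → ℂ) (y : ι → ZMod 2) : ℂ :=
  ∑ x, F x * signChar (x ⬝ᵥ y)

lemma sum_walsh_add_mul_conj_walsh (F : (ι → ZMod 2) → ℂ) (s : ι → ZMod 2) :
    ∑ y, walsh F (y + s) * conj (walsh F y)
      = 2 ^ Fintype.card ι * ∑ x, F x * conj (F x) * signChar (x ⬝ᵥ s) := by
  have hterm : ∀ y x x', F x * signChar (x ⬝ᵥ (y + s)) * (conj (F x') * signChar (x' ⬝ᵥ y))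
      = F x * conj (F x') * signChar (x ⬝ᵥ s) * signChar ((x + x') ⬝ᵥ y) := by
    intro y x x'
    simp only [dotProduct_add, add_dotProduct, AddChar.map_add_eq_mul]
    ring
  have hdiag : ∀ x x' : ι → ZMod 2, x + x' = 0 ↔ x' = x := fun x x' => by
    rw [add_eq_zero_iff_eq_neg', show -x = x from funext fun i => ZMod.neg_eq_self_mod_two _]
  calc ∑ y, walsh F (y + s) * conj (walsh F y)
      = ∑ x, ∑ x', ∑ y, F x * conj (F x') * signChar (x ⬝ᵥ s) * signChar ((x + x') ⬝ᵥ y) := by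
        simp only [walsh, map_sum, map_mul, conj_signChar]
        simp only [sum_mul_sum, hterm]
        rw [sum_comm]
        exact sum_congr rfl fun x _ => sum_comm
    _ = 2 ^ Fintype.card ι * ∑ x, F x * conj (F x) * signChar (x ⬝ᵥ s) := by
        simp only [← mul_sum, sum_signChar_dotProduct, hdiag, mul_ite, mul_zero, sum_ite_eq',
          mem_univ, if_true]
        rw [mul_sum]
        exact sum_congr rfl fun x _ => mul_comm _ _

end Vectors

section Matrices

variable {κ ι : Type*} [Fintype κ] [Fintype ι]

lemma wt_mulVec_sub_wt_mulVec_add (P : Matrix κ ι (ZMod 2)) (y s : ι → ZMod 2) :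
    (wt (P *ᵥ y) : ℤ) - wt (P *ᵥ (y + s)) = 2 * wt (P *ᵥ y * P *ᵥ s) - wt (P *ᵥ s) := by
  rw [mulVec_add, wt_add]
  ring

lemma four_dvd_wt_mulVec_mul_mulVec {P : Matrix κ ι (ZMod 2)} {s : ι → ZMod 2}
    (h : ∀ y, (8 : ℤ) ∣ wt (P *ᵥ y) - wt (P *ᵥ (y + s))) (y : ι → ZMod 2) :
    (4 : ℤ) ∣ wt (P *ᵥ y * P *ᵥ s) := by
  have h0 := h 0
  have hy := h y
  rw [wt_mulVec_sub_wt_mulVec_add] at h0 hy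
  simp only [mulVec_zero, zero_mul, wt_zero, Nat.cast_zero, mul_zero, zero_sub] at h0
  omega

lemma two_dvd_wt_mulVec_mul_mulVec_mul_mulVec {P : Matrix κ ι (ZMod 2)} {s : ι → ZMod 2}
    (h : ∀ y, (4 : ℤ) ∣ wt (P *ᵥ y * P *ᵥ s)) (d e : ι → ZMod 2) :
    2 ∣ wt (P *ᵥ d * P *ᵥ e * P *ᵥ s) := by
  have hidem : P *ᵥ d * P *ᵥ s * (P *ᵥ e * P *ᵥ s) = P *ᵥ d * P *ᵥ e * P *ᵥ s := by
    ext i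
    have hsq := ZMod.pow_card ((P *ᵥ s) i)
    simp only [Pi.mul_apply]
    linear_combination (P *ᵥ d) i * (P *ᵥ e) i * hsq
  rw [← hidem]
  refine two_dvd_wt_mul_of_four_dvd (h d) (h e) ?_
  rw [← add_mul, ← mulVec_add]
  exact h (d + e)

lemma sum_filter_dotProduct_eq_wt (P : Matrix κ ι (ZMod 2)) (d e s : ι → ZMod 2) :
    (∑ i ∈ univ.filter (fun i => P i ⬝ᵥ d = 1 ∧ P i ⬝ᵥ e = 1), P i) ⬝ᵥ s
      = wt (P *ᵥ d * P *ᵥ e * P *ᵥ s) := by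
  rw [sum_dotProduct _ P s, sum_filter, ← sum_eq_wt]
  refine sum_congr rfl fun i _ => ?_
  simp only [Pi.mul_apply, mulVec]
  rcases zmod_two_eq_zero_or_one (P i ⬝ᵥ d) with hd | hd <;>
    rcases zmod_two_eq_zero_or_one (P i ⬝ᵥ e) with he | he <;> simp [hd, he]

variable [DecidableEq κ] [DecidableEq ι]

noncomputable def outputAmplitude (P : Matrix κ ι (ZMod 2)) (θ : ℝ) (x : ι → ZMod 2) : ℂ :=
  ∑ a ∈ univ.filter (fun a : κ → ZMod 2 => a ᵥ* P = x), amplitude θ a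

lemma walsh_outputAmplitude (P : Matrix κ ι (ZMod 2)) (θ : ℝ) (y : ι → ZMod 2) :
    walsh (outputAmplitude P θ) y
      = exp ((θ * (Fintype.card κ - 2 * wt (P *ᵥ y)) : ℝ) * I) := by
  rw [← sum_amplitude_mul_signChar, walsh]
  simp only [outputAmplitude, sum_mul]
  rw [← sum_fiberwise univ (· ᵥ* P) fun a => amplitude θ a * signChar (a ⬝ᵥ (P *ᵥ y))]
  refine sum_congr rfl fun x _ => sum_congr rfl fun a ha => ?_
  rw [dotProduct_mulVec, (mem_filter.1 ha).2]

lemma walsh_add_mul_conj_walsh_outputAmplitude (P : Matrix κ ι (ZMod 2)) (θ : ℝ)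
    (y t : ι → ZMod 2) :
    walsh (outputAmplitude P θ) (y + t) * conj (walsh (outputAmplitude P θ) y)
      = exp ((2 * θ * (wt (P *ᵥ y) - wt (P *ᵥ (y + t)) : ℤ) : ℝ) * I) := by
  rw [walsh_outputAmplitude, walsh_outputAmplitude, exp_ofReal_mul_I_mul_conj]
  congr 3
  push_cast
  ring

end Matrices

lemma XProb_eq_norm_sq {k n : ℕ} (P : Matrix (Fin k) (Fin n) (ZMod 2)) (θ : ℝ)
    (x : Fin n → ZMod 2) : XProb P θ x = ‖outputAmplitude P θ x‖ ^ 2 := by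
  simp only [XProb, outputAmplitude, amplitude, Fintype.card_fin]

lemma bias_mul_two_mul_two_pow {k n : ℕ} (P : Matrix (Fin k) (Fin n) (ZMod 2)) (θ : ℝ)
    (s : Fin n → ZMod 2) :
    bias P θ s * 2 * 2 ^ n
      = 2 ^ n + ∑ y, Real.cos (2 * θ * (wt (P *ᵥ y) - wt (P *ᵥ (y + s)) : ℤ)) := by
  have hbias : (bias P θ s : ℂ) * 2
      = ∑ x, outputAmplitude P θ x * conj (outputAmplitude P θ x) * signChar (x ⬝ᵥ 0)
        + ∑ x, outputAmplitude P θ x * conj (outputAmplitude P θ x) * signChar (x ⬝ᵥ s) := by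
    simp only [bias, ofReal_sum, XProb_eq_norm_sq, Complex.sq_norm, sum_filter, sum_mul,
      dotProduct_zero, AddChar.map_zero_eq_one, ← sum_add_distrib, ← mul_add, one_add_signChar]
    refine sum_congr rfl fun x _ => ?_
    split_ifs <;> simp [Complex.mul_conj]
  have hsum : ((bias P θ s * 2 * 2 ^ n : ℝ) : ℂ)
      = ∑ y, (walsh (outputAmplitude P θ) (y + 0) * conj (walsh (outputAmplitude P θ) y)
        + walsh (outputAmplitude P θ) (y + s) * conj (walsh (outputAmplitude P θ) y)) := by
    rw [sum_add_distrib, sum_walsh_add_mul_conj_walsh, sum_walsh_add_mul_conj_walsh, ← mul_add,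
      ← hbias, Fintype.card_fin]
    push_cast
    ring
  have hre := congrArg re hsum
  simp only [ofReal_re, re_sum, add_re, walsh_add_mul_conj_walsh_outputAmplitude,
    exp_ofReal_mul_I_re] at hre
  simp only [add_zero, sub_self, Int.cast_zero, mul_zero, Real.cos_zero, sum_add_distrib,
    sum_const, card_univ] at hre
  rw [hre]
  simp

theorem quantum_bias_one_implies_classical_bias_one {k n : ℕ}
    (P : Matrix (Fin k) (Fin n) (ZMod 2)) (s : Fin n → ZMod 2)
    (h : bias P (Real.pi / 8) s = 1) :
    ((Finset.univ.filter (fun de : (Fin n → ZMod 2) × (Fin n → ZMod 2) =>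
        dotProduct
          (∑ i ∈ Finset.univ.filter (fun i : Fin k =>
              dotProduct (P i) de.1 = 1 ∧ dotProduct (P i) de.2 = 1), P i)
          s = 0)).card : ℝ) / ((2 : ℝ) ^ n) ^ 2 = 1 := by
  have hcard : Fintype.card (Fin n → ZMod 2) = 2 ^ n := by simp
  have hcos : ∀ y, Real.cos (2 * (Real.pi / 8) * (wt (P *ᵥ y) - wt (P *ᵥ (y + s)) : ℤ)) = 1 := by
    refine cos_eq_one_of_sum_cos_eq_card _ ?_
    have hbias := bias_mul_two_mul_two_pow P (Real.pi / 8) s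
    rw [h] at hbias
    rw [hcard, Nat.cast_pow, Nat.cast_ofNat]
    linarith
  have hphase : ∀ y, (8 : ℤ) ∣ wt (P *ᵥ y) - wt (P *ᵥ (y + s)) := fun y =>
    dvd_of_cos_two_pi_mul_div_eq_one (by norm_num) (by rw [← hcos y]; push_cast; ring_nf)
  have hclassical : ∀ d e : Fin n → ZMod 2,
      (∑ i ∈ univ.filter (fun i => P i ⬝ᵥ d = 1 ∧ P i ⬝ᵥ e = 1), P i) ⬝ᵥ s = 0 := by
    intro d e
    rw [sum_filter_dotProduct_eq_wt, ZMod.natCast_eq_zero_iff]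
    exact two_dvd_wt_mulVec_mul_mulVec_mul_mulVec (four_dvd_wt_mulVec_mul_mulVec hphase) d e
  rw [filter_true_of_mem fun de _ => hclassical de.1 de.2, card_univ, Fintype.card_prod, hcard]
  field_simp
  push_cast
  ring
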